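/- Let I₁ and I₂ be sets of prime numbers such that I₁ is not contained in I₂. Then there exists a prime q ∈ I₁ \ I₂ such that the cycle graph semiring S_{c_q} satisfies the identity c_p ≈ x³ for every p ∈ I₂, but does not satisfy the identity c_q ≈ x³. -/
import Mathlib


universe u

-- The underlying set of the graph semiring of a graph with vertex set `V`:
-- the vertices together with two extra elements `0` and `ω`.
inductive GS (V : Type u) : Type u where
  | zero : GS V
  | omega : GS V
  | vert : V → GS V

-- Multiplication of the graph semiring: `x·y = ω` if `x, y` are vertices joined by an
-- edge, and `x·y = 0` otherwise.
open Classical in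
noncomputable def gsMul {V : Type u} (E : V → V → Prop) : GS V → GS V → GS V
  | GS.vert a, GS.vert b => if E a b then GS.omega else GS.zero
  | _, _ => GS.zero

-- The flat addition of the graph semiring: `a + b = a` if `a = b`, else `0`.
open Classical in
noncomputable def gsAdd {V : Type u} (a b : GS V) : GS V :=
  if a = b then a else GS.zero

-- `gsSum f n = f 0 + f 1 + ⋯ + f n` (a sum of `n + 1` terms).
noncomputable def gsSum {V : Type u} (f : ℕ → GS V) : ℕ → GS V
  | 0 => f 0
  | n + 1 => gsAdd (gsSum f n) (f (n + 1))

-- `E` is a graph (in the sense of the paper): a directed graph with no isolated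
-- vertices in which every vertex has out-degree at most 1 and in-degree at most 1.
def IsGraph {V : Type u} (E : V → V → Prop) : Prop :=
  (∀ v : V, ∃ u : V, E v u ∨ E u v) ∧
  (∀ v a b : V, E v a → E v b → a = b) ∧
  (∀ v a b : V, E a v → E b v → a = b)

-- `v 0, v 1, …, v (m - 1)` is a path of the graph `E` with `m` vertices.
def IsPathOn {V : Type u} (E : V → V → Prop) (m : ℕ) (v : ℕ → V) : Prop :=
  (∀ i < m, ∀ j < m, v i = v j → i = j) ∧
  (∀ i : ℕ, i + 1 < m → E (v i) (v (i + 1)))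

-- `v 0, v 1, …, v (m - 1)` is a cycle of the graph `E` of length `m`.
def IsCycleOn {V : Type u} (E : V → V → Prop) (m : ℕ) (v : ℕ → V) : Prop :=
  1 ≤ m ∧
  (∀ i < m, ∀ j < m, v i = v j → i = j) ∧
  (∀ i : ℕ, i + 1 < m → E (v i) (v (i + 1))) ∧
  E (v (m - 1)) (v 0)

-- The edge relation of the cycle with vertex set `ZMod n`: edges `(i, i + 1)`.
def cycleE (n : ℕ) : ZMod n → ZMod n → Prop := fun i j => j = i + 1

-- The cycle graph semiring `S_{c_n}` satisfies the identity `c_m ≈ x³`.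
def cycleSatC (n m : ℕ) : Prop :=
  ∀ (x : GS (ZMod n)) (g : ℕ → GS (ZMod n)),
    gsSum (fun i => gsMul (cycleE n) (g i) (g ((i + 1) % m))) (m - 1) =
      gsMul (cycleE n) (gsMul (cycleE n) x x) x

-- aux lemmas
lemma gsMul_cases {V : Type u} (E : V → V → Prop) (x y : GS V) :
    gsMul E x y = GS.zero ∨ gsMul E x y = GS.omega := by
  cases x <;> cases y <;> try exact Or.inl rfl
  simp only [gsMul]
  split
  · exact Or.inr rfl
  · exact Or.inl rfl

lemma gsMul_eq_omega {V : Type u} {E : V → V → Prop} {x y : GS V}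
    (h : gsMul E x y = GS.omega) : ∃ a b, x = GS.vert a ∧ y = GS.vert b ∧ E a b := by
  cases x <;> cases y <;> simp only [gsMul] at h <;> try cases h
  rename_i a b
  by_cases hE : E a b
  · exact ⟨a, b, rfl, rfl, hE⟩
  · rw [if_neg hE] at h; cases h

lemma gsAdd_ne_zero {V : Type u} {a b : GS V} (h : gsAdd a b ≠ GS.zero) :
    a = b ∧ gsAdd a b = a := by
  unfold gsAdd at *
  by_cases hab : a = b
  · simp [hab]
  · simp [hab] at h

lemma gsSum_all {V : Type u} (f : ℕ → GS V) :
    ∀ k, gsSum f k ≠ GS.zero → ∀ i ≤ k, f i = gsSum f k := by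
  intro k
  induction k with
  | zero => intro h i hi; interval_cases i; rfl
  | succ k ih =>
    intro h i hi
    have hs : gsSum f (k+1) = gsAdd (gsSum f k) (f (k+1)) := rfl
    obtain ⟨heq, hval⟩ := gsAdd_ne_zero (hs ▸ h)
    have hSk : gsSum f (k+1) = gsSum f k := by rw [hs, hval]
    have hk : gsSum f k ≠ GS.zero := fun hz => h (by rw [hSk, hz])
    rw [hSk]
    rcases Nat.lt_or_ge i (k+1) with hlt | hge
    · exact ih hk i (Nat.lt_succ_iff.mp hlt)
    · have : i = k + 1 := le_antisymm hi hge
      rw [this]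
      exact heq.symm

lemma gsSum_const {V : Type u} (f : ℕ → GS V) (c : GS V) :
    ∀ k, (∀ i ≤ k, f i = c) → gsSum f k = c := by
  intro k
  induction k with
  | zero => intro h; exact h 0 le_rfl
  | succ k ih =>
    intro h
    have h1 : gsSum f k = c := ih fun i hi => h i (Nat.le_succ_of_le hi)
    show gsAdd (gsSum f k) (f (k+1)) = c
    rw [h1, h (k+1) le_rfl]
    simp [gsAdd]

lemma rhs_zero {n : ℕ} (hn : 2 ≤ n) (x : GS (ZMod n)) :
    gsMul (cycleE n) (gsMul (cycleE n) x x) x = GS.zero := by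
  have hxx : gsMul (cycleE n) x x = GS.zero := by
    cases x with
    | vert a =>
      simp only [gsMul]
      rw [if_neg]
      intro hE
      have : (1 : ZMod n) = 0 := by
        have := hE.symm
        simpa [cycleE, eq_comm, left_eq_add] using hE
      have : (n : ℕ) ∣ 1 := by
        have := (ZMod.natCast_eq_zero_iff 1 n).mp (by simpa using this)
        exact this
      have := Nat.le_of_dvd one_pos this
      omega
    | zero => rfl
    | omega => rfl
  rw [hxx]
  cases x <;> rfl

lemma sat_of_not_dvd {n m : ℕ} (hn : 2 ≤ n) (hm : 1 ≤ m) (hnd : ¬ (n:ℕ) ∣ m) :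
    cycleSatC n m := by
  intro x g
  rw [rhs_zero hn x]
  by_contra hne
  set f : ℕ → GS (ZMod n) := fun i => gsMul (cycleE n) (g i) (g ((i + 1) % m)) with hf
  have hall : ∀ i ≤ m - 1, f i = gsSum f (m-1) := gsSum_all f (m-1) hne
  have hS : gsSum f (m-1) = GS.omega := by
    rcases gsMul_cases (cycleE n) (g 0) (g ((0+1)%m)) with h0 | h0
    · exact absurd ((hall 0 (Nat.zero_le _)).symm.trans h0) hne
    · rw [← hall 0 (Nat.zero_le _)]; exact h0
  have homega : ∀ i ≤ m - 1, ∃ a, g i = GS.vert a ∧ g ((i+1)%m) = GS.vert (a+1) := by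
    intro i hi
    have := (hall i hi).trans hS
    obtain ⟨a, b, hga, hgb, hE⟩ := gsMul_eq_omega this
    exact ⟨a, hga, by rw [hgb, hE]⟩
  obtain ⟨a0, hg0, _⟩ := homega 0 (Nat.zero_le _)
  have key : ∀ i ≤ m - 1, g i = GS.vert (a0 + (i : ZMod n)) := by
    intro i
    induction i with
    | zero => intro _; simpa using hg0
    | succ i ih =>
      intro hi
      have hi' : i ≤ m - 1 := Nat.le_of_succ_le hi
      obtain ⟨a, hga, hgb⟩ := homega i hi'
      have : (i + 1) % m = i + 1 := Nat.mod_eq_of_lt (by omega)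
      rw [this] at hgb
      have ha : a = a0 + (i : ZMod n) := GS.vert.inj (hga.symm.trans (ih hi'))
      rw [hgb, ha]
      push_cast
      ring_nf
  -- wrap around
  obtain ⟨a, hga, hgb⟩ := homega (m-1) le_rfl
  have hmod : (m - 1 + 1) % m = 0 := by
    have : m - 1 + 1 = m := by omega
    rw [this, Nat.mod_self]
  rw [hmod] at hgb
  have ha : a = a0 + ((m-1 : ℕ) : ZMod n) := GS.vert.inj (hga.symm.trans (key (m-1) le_rfl))
  rw [hg0, ha] at hgb
  have : a0 = a0 + ((m-1:ℕ) : ZMod n) + 1 := GS.vert.inj hgb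
  have hm0 : ((m : ℕ) : ZMod n) = 0 := by
    have hcast : ((m-1:ℕ) : ZMod n) + 1 = ((m:ℕ) : ZMod n) := by
      have : (m - 1) + 1 = m := by omega
      rw [← this]; push_cast; ring
    have := this
    rw [add_assoc, hcast] at this
    exact (left_eq_add.mp this)
  exact hnd ((ZMod.natCast_eq_zero_iff m n).mp hm0)

lemma not_sat_self {n : ℕ} (hn : 2 ≤ n) : ¬ cycleSatC n n := by
  intro h
  have := h GS.zero (fun i => GS.vert (i : ZMod n))
  rw [rhs_zero hn GS.zero] at this
  have hsum : gsSum (fun i => gsMul (cycleE n) (GS.vert (i : ZMod n))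
      (GS.vert (((i+1)%n : ℕ) : ZMod n))) (n-1) = GS.omega := by
    apply gsSum_const
    intro i _
    simp only [gsMul]
    rw [if_pos]
    show (((i+1)%n : ℕ) : ZMod n) = (i : ZMod n) + 1
    push_cast [ZMod.natCast_mod]
    ring
  rw [hsum] at this
  exact absurd this (by simp)


/-- If `I₁, I₂` are sets of primes with `I₁ ⊄ I₂`, then there is a prime
`q ∈ I₁ \ I₂` such that `S_{c_q}` satisfies `c_p ≈ x³` for every `p ∈ I₂` but does not
satisfy `c_q ≈ x³`. -/
theorem stmt_9 (I₁ I₂ : Set ℕ)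
    (h₁ : ∀ p ∈ I₁, Nat.Prime p) (h₂ : ∀ p ∈ I₂, Nat.Prime p)
    (hns : ¬ I₁ ⊆ I₂) :
    ∃ q : ℕ, Nat.Prime q ∧ q ∈ I₁ ∧ q ∉ I₂ ∧
      (∀ p ∈ I₂, cycleSatC q p) ∧ ¬ cycleSatC q q := by
  obtain ⟨q, hq1, hq2⟩ := Set.not_subset.mp hns
  have hqp : Nat.Prime q := h₁ q hq1
  refine ⟨q, hqp, hq1, hq2, ?_, not_sat_self hqp.two_le⟩
  intro p hp
  have hpp : Nat.Prime p := h₂ p hp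
  refine sat_of_not_dvd hqp.two_le hpp.one_lt.le ?_
  intro hdvd
  have heq : q = p := (Nat.prime_dvd_prime_iff_eq hqp hpp).mp hdvd
  exact hq2 (heq ▸ hp)
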